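/- arXiv:1404.2178 — 3 statements merged into one kernel-verified Lean document; each statement's English description precedes it below -/
import Mathlib

section
/- There exists a basic sequence Q = (q_n)_{n∈ℕ} of integers, each q_n ≥ 2 a power of 2, which is limit computable (i.e., there is a computable function g : ℕ × ℕ → ℕ with q_n = lim_{s→∞} g(s,n) for every n), such that no computable real number in [0,1] is Q-distribution-normal. -/
open scoped Classical

/-- A sequence of reals is uniformly distributed modulo 1. -/
def UnifDistMod1 (y : ℕ → ℝ) : Prop :=
  ∀ a b : ℝ, 0 ≤ a → a ≤ b → b ≤ 1 →
    Filter.Tendsto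
      (fun n => (((Finset.range n).filter
        (fun k => Int.fract (y k) ∈ Set.Icc a b)).card : ℝ) / (n : ℝ))
      Filter.atTop (nhds (b - a))

/-- `x` is distribution normal with respect to the basic sequence `Q`:
the sequence `x, q₀x, q₀q₁x, …` is uniformly distributed mod 1. -/
def QDistNormal (Q : ℕ → ℕ) (x : ℝ) : Prop :=
  UnifDistMod1 (fun k => (∏ i ∈ Finset.range k, (Q i : ℝ)) * x)

/-- The real with binary expansion `α`. -/
noncomputable def binVal (α : ℕ → Bool) : ℝ :=
  ∑' n : ℕ, (if α n then (1 : ℝ) else 0) / 2 ^ (n + 1)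

/-- A real in `[0,1]` is computable if it has a computable binary expansion. -/
def ComputableReal (x : ℝ) : Prop :=
  ∃ α : ℕ → Bool, Computable α ∧ x = binVal α

/-!
Take `q n = 2 ^ d n` and write `K n = d 0 + ⋯ + d (n - 1)`, so that the fractional part of
`q 0 ⋯ q (n - 1) x` is `0.x_{K n} x_{K n + 1} …` in binary. Each block of positions
`[4 ^ t, 4 ^ (t + 1))` is devoted to one code `c`, every code owning infinitely many blocks. At such
a position `d` is chosen so that `c` outputs `0` at `K + d`, or `d = 1` if `c` outputs no `0` beyond
`K`. If `c` computes the digits of `x`, the fractional part is therefore `0.0…` or `0.11… = 1 ≡ 0`,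
hence `≤ 1/2`, on the whole block, that is on three quarters of the first `4 ^ (t + 1)` indices, and
the frequency of `[0, 1/2]` does not tend to `1/2`. Running the search for `d` with `evaln s` gives
stage approximations that are primitive recursive and stabilise, so `q` is limit computable.
-/

open Filter Finset

namespace Real

theorem natCast_mul_ofDigits {b : ℕ} (a : ℕ → Fin b) :
    (b : ℝ) * ofDigits a = a 0 + ofDigits (fun i ↦ a (i + 1)) := by
  have hb : (b : ℝ) ≠ 0 := by exact_mod_cast (Fin.pos (a 0)).ne'
  rw [ofDigits_eq_sum_add_ofDigits a 1]
  simp only [range_one, sum_singleton, ofDigitsTerm, zero_add, pow_one]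
  field_simp

theorem exists_natCast_pow_mul_ofDigits {b : ℕ} (a : ℕ → Fin b) (K : ℕ) :
    ∃ m : ℕ, (b : ℝ) ^ K * ofDigits a = m + ofDigits (fun i ↦ a (i + K)) := by
  induction K generalizing a with
  | zero => exact ⟨0, by simp⟩
  | succ K ih =>
    obtain ⟨m, hm⟩ := ih (fun i ↦ a (i + 1))
    refine ⟨a 0 * b ^ K + m, ?_⟩
    calc (b : ℝ) ^ (K + 1) * ofDigits a = b ^ K * (b * ofDigits a) := by ring
      _ = b ^ K * a 0 + b ^ K * ofDigits (fun i ↦ a (i + 1)) := by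
        rw [natCast_mul_ofDigits, mul_add]
      _ = _ := by
        rw [hm]; push_cast; simp_rw [← add_assoc]; ring

-- In base two, `0.0…` is at most `1/2`, and `0.11…` is `1 ≡ 0` mod one.
theorem fract_ofDigits_le_half {a : ℕ → Fin 2} (h : a 0 = 0 ∨ ∀ i, a i = 1) :
    Int.fract (ofDigits a) ≤ 1 / 2 := by
  rcases h with h | h
  · have hle : ofDigits a ≤ 1 / 2 := by
      have hmul := natCast_mul_ofDigits a
      rw [h, Fin.val_zero, Nat.cast_zero, zero_add, Nat.cast_ofNat] at hmul
      linarith [ofDigits_le_one (fun i ↦ a (i + 1))]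
    rwa [Int.fract_eq_self.2 ⟨ofDigits_nonneg a, by linarith⟩]
  · have : a = fun _ ↦ Fin.last 1 := funext h
    rw [this, ofDigits_const_last_eq_one]
    norm_num

end Real

theorem binVal_eq_ofDigits (α : ℕ → Bool) :
    binVal α = Real.ofDigits (fun n ↦ if α n then (1 : Fin 2) else 0) := by
  refine tsum_congr fun n ↦ ?_
  cases h : α n <;> simp [h, Real.ofDigitsTerm, div_eq_mul_inv]

theorem fract_two_pow_mul_binVal_le_half {α : ℕ → Bool} {K : ℕ}
    (h : α K = false ∨ ∀ j, α (j + K) = true) :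
    Int.fract (2 ^ K * binVal α) ≤ 1 / 2 := by
  obtain ⟨m, hm⟩ := Real.exists_natCast_pow_mul_ofDigits
    (fun n ↦ if α n then (1 : Fin 2) else 0) K
  rw [binVal_eq_ofDigits, ← Nat.cast_ofNat, hm, Int.fract_natCast_add]
  refine Real.fract_ofDigits_le_half ?_
  rcases h with h | h <;> simp [h]

namespace Primrec

theorem nat_pow : Primrec₂ fun a b : ℕ ↦ a ^ b :=
  Primrec₂.unpaired'.mp Nat.Primrec.pow

theorem nat_log (b : ℕ) : Primrec (Nat.log b) := by
  by_cases hb : 1 < b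
  swap
  · simpa [funext (Nat.log_of_left_le_one (not_lt.1 hb))] using Primrec.const 0
  have hp : PrimrecRel fun k t : ℕ ↦ b ^ t ≤ k :=
    nat_le.comp₂ (nat_pow.comp₂ (Primrec₂.const b) Primrec₂.right) Primrec₂.left
  refine (nat_findGreatest .id hp).of_eq fun k ↦ ?_
  rw [Nat.findGreatest_eq_iff]
  refine ⟨Nat.log_le_self b k, fun hk ↦ Nat.pow_log_le_self b ?_, fun t ht _ ↦ ?_⟩
  · rintro rfl
    simp at hk
  · exact not_le.2 (Nat.lt_pow_of_log_lt hb ht)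

end Primrec

open Nat.Partrec (Code)
open Nat.Partrec.Code
open Encodable (encode)

noncomputable def nextZeroOffset (c : Code) (K : ℕ) : ℕ :=
  if h : ∃ d, 0 ∈ eval c (K + d + 1) then Nat.find h + 1 else 1

def nextZeroOffsetAt (s : ℕ) (c : Code) (K : ℕ) : ℕ :=
  let d := (List.range s).findIdx fun d ↦ evaln s c (K + d + 1) = some 0
  if d < s then d + 1 else 1

theorem one_le_nextZeroOffset (c : Code) (K : ℕ) : 1 ≤ nextZeroOffset c K := by
  unfold nextZeroOffset
  split <;> omega

theorem nextZeroOffset_spec (c : Code) (K : ℕ) :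
    0 ∈ eval c (K + nextZeroOffset c K) ∨ ∀ j, 0 ∉ eval c (j + (K + nextZeroOffset c K)) := by
  unfold nextZeroOffset
  split_ifs with h
  · exact .inl (Nat.find_spec h)
  · push Not at h
    exact .inr fun j ↦ by rw [show j + (K + 1) = K + j + 1 by omega]; exact h j

theorem eventually_nextZeroOffsetAt_eq (c : Code) (K : ℕ) :
    ∀ᶠ s in atTop, nextZeroOffsetAt s c K = nextZeroOffset c K := by
  unfold nextZeroOffset
  split_ifs with h
  · obtain ⟨s₀, hs₀⟩ := evaln_complete.1 (Nat.find_spec h)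
    filter_upwards [eventually_ge_atTop s₀, eventually_gt_atTop (Nat.find h)] with s hs hlt
    have hfind : (List.range s).findIdx (fun d ↦ evaln s c (K + d + 1) = some 0) = Nat.find h := by
      rw [List.findIdx_eq (by simpa using hlt)]
      refine ⟨by simpa using evaln_mono hs hs₀, fun j hj ↦ ?_⟩
      simpa using fun hj' ↦ Nat.find_min h hj (evaln_sound hj')
    simp [nextZeroOffsetAt, hfind, hlt]
  · refine Eventually.of_forall fun s ↦ ?_
    have hfind : (List.range s).findIdx (fun d ↦ evaln s c (K + d + 1) = some 0) = s := by
      refine (List.findIdx_eq_length_of_false fun d _ ↦ ?_).trans List.length_range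
      exact decide_eq_false fun hd ↦ h ⟨d, evaln_sound hd⟩
    simp [nextZeroOffsetAt, hfind]

theorem primrec_nextZeroOffsetAt :
    Primrec fun p : ℕ × Code × ℕ ↦ nextZeroOffsetAt p.1 p.2.1 p.2.2 := by
  have hev : Primrec fun q : (ℕ × Code × ℕ) × ℕ ↦ evaln q.1.1 q.1.2.1 (q.1.2.2 + q.2 + 1) :=
    primrec_evaln.comp
      (((Primrec.fst.comp .fst).pair (Primrec.fst.comp (Primrec.snd.comp .fst))).pair
        (Primrec.succ.comp (Primrec.nat_add.comp (Primrec.snd.comp (Primrec.snd.comp .fst)) .snd)))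
  have hfind : Primrec fun p : ℕ × Code × ℕ ↦
      (List.range p.1).findIdx fun d ↦ evaln p.1 p.2.1 (p.2.2 + d + 1) = some 0 :=
    Primrec.list_findIdx (Primrec.list_range.comp .fst)
      (Primrec.eq.decide.comp hev (Primrec.const (some (0 : ℕ)))).to₂
  exact Primrec.ite (Primrec.nat_lt.comp hfind .fst) (Primrec.succ.comp hfind) (Primrec.const 1)

theorem exists_code_zero_mem_eval_iff {α : ℕ → Bool} (hα : Computable α) :
    ∃ c : Code, ∀ n, 0 ∈ eval c n ↔ α n = false := by
  obtain ⟨c, hc⟩ := exists_code.1 (Partrec.nat_iff.1 (Computable.encode.comp hα))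
  refine ⟨c, fun n ↦ ?_⟩
  rw [hc]
  cases h : α n <;> simp [h, eq_comm]

def accumulate (f : ℕ → ℕ → ℕ) : ℕ → ℕ
  | 0 => 0
  | n + 1 => accumulate f n + f n (accumulate f n)

theorem eventually_accumulate_eq {F : ℕ → ℕ → ℕ → ℕ} {f : ℕ → ℕ → ℕ}
    (h : ∀ n K, ∀ᶠ s in atTop, F s n K = f n K) (n : ℕ) :
    ∀ᶠ s in atTop, accumulate (F s) n = accumulate f n := by
  induction n with
  | zero => exact .of_forall fun _ ↦ rfl
  | succ n ih =>
    filter_upwards [ih, h n (accumulate f n)] with s hs hF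
    simp only [accumulate, hs, hF]

theorem primrec₂_accumulate {F : ℕ → ℕ → ℕ → ℕ}
    (hF : Primrec fun p : ℕ × ℕ × ℕ ↦ F p.1 p.2.1 p.2.2) :
    Primrec₂ fun s n ↦ accumulate (F s) n := by
  have hstep : Primrec₂ fun (s : ℕ) (p : ℕ × ℕ) ↦ p.2 + F s p.1 p.2 :=
    (Primrec.nat_add.comp (Primrec.snd.comp .snd)
      (hF.comp (Primrec.fst.pair ((Primrec.fst.comp .snd).pair (Primrec.snd.comp .snd))))).to₂
  refine (Primrec.nat_rec (.const 0) hstep).of_eq fun s n ↦ ?_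
  induction n with
  | zero => rfl
  | succ n ih => simp only [accumulate, ← ih]

-- Every code owns all positions of infinitely many blocks `[4 ^ t, 4 ^ (t + 1))`.
def requirement (k : ℕ) : Code := Denumerable.ofNat Code (Nat.log 4 k).unpair.1

theorem primrec_requirement : Primrec requirement :=
  (Primrec.ofNat Code).comp (Primrec.fst.comp (Primrec.unpair.comp (Primrec.nat_log 4)))

theorem requirement_eq_of_mem_Ico {c : Code} {M k : ℕ}
    (hk : k ∈ Ico (4 ^ Nat.pair (encode c) M) (4 ^ (Nat.pair (encode c) M + 1))) :
    requirement k = c := by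
  rw [requirement, Nat.log_eq_of_pow_le_of_lt_pow (mem_Ico.1 hk).1 (mem_Ico.1 hk).2,
    Nat.unpair_pair, Denumerable.ofNat_encode]

noncomputable def diagExponent : ℕ → ℕ := accumulate fun n ↦ nextZeroOffset (requirement (n + 1))

def diagExponentAt (s : ℕ) : ℕ → ℕ := accumulate fun n ↦ nextZeroOffsetAt s (requirement (n + 1))

noncomputable def diagSeq (n : ℕ) : ℕ := 2 ^ nextZeroOffset (requirement (n + 1)) (diagExponent n)

def diagSeqAt (s n : ℕ) : ℕ := 2 ^ nextZeroOffsetAt s (requirement (n + 1)) (diagExponentAt s n)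

theorem two_le_diagSeq (n : ℕ) : 2 ≤ diagSeq n :=
  Nat.le_self_pow (Nat.one_le_iff_ne_zero.1 (one_le_nextZeroOffset _ _)) 2

theorem prod_diagSeq (n : ℕ) : ∏ i ∈ range n, (diagSeq i : ℝ) = 2 ^ diagExponent n := by
  induction n with
  | zero => simp [diagExponent, accumulate]
  | succ n ih =>
    rw [prod_range_succ, ih, diagSeq, diagExponent, accumulate, pow_add]
    push_cast
    rfl

theorem eventually_diagSeqAt_eq (n : ℕ) : ∀ᶠ s in atTop, diagSeqAt s n = diagSeq n := by
  have hexp := eventually_accumulate_eq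
    (fun n K ↦ eventually_nextZeroOffsetAt_eq (requirement (n + 1)) K) n
  filter_upwards [hexp, eventually_nextZeroOffsetAt_eq (requirement (n + 1)) (diagExponent n)]
    with s hs hoff
  rw [diagSeqAt, diagExponentAt, hs, ← diagExponent, hoff, diagSeq]

theorem computable₂_diagSeqAt : Computable₂ diagSeqAt := by
  have hoff : Primrec fun p : ℕ × ℕ × ℕ ↦ nextZeroOffsetAt p.1 (requirement (p.2.1 + 1)) p.2.2 :=
    primrec_nextZeroOffsetAt.comp (Primrec.fst.pair
      ((primrec_requirement.comp (Primrec.succ.comp (Primrec.fst.comp .snd))).pair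
        (Primrec.snd.comp .snd)))
  have hexp := primrec₂_accumulate
    (F := fun s n K ↦ nextZeroOffsetAt s (requirement (n + 1)) K) hoff
  exact (Primrec.nat_pow.comp (.const 2) (hoff.comp (Primrec.fst.pair
    (Primrec.snd.pair (hexp.comp .fst .snd))))).to₂.to_comp

theorem fract_prod_diagSeq_mul_binVal_le_half {α : ℕ → Bool} {c : Code}
    (hc : ∀ n, 0 ∈ eval c n ↔ α n = false) {n : ℕ} (hn : requirement (n + 1) = c) :
    Int.fract ((∏ i ∈ range (n + 1), (diagSeq i : ℝ)) * binVal α) ≤ 1 / 2 := by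
  rw [prod_diagSeq]
  refine fract_two_pow_mul_binVal_le_half ?_
  have hexp : diagExponent (n + 1) = diagExponent n + nextZeroOffset c (diagExponent n) := by
    rw [← hn]; rfl
  rw [hexp]
  rcases nextZeroOffset_spec c (diagExponent n) with h | h
  · exact .inl ((hc _).1 h)
  · exact .inr fun j ↦ by simpa [hc] using h j

theorem not_unifDistMod1_of_frequently_fract_le_half {y : ℕ → ℝ}
    (h : ∃ᶠ N in atTop, ∀ k ∈ Ico N (4 * N), Int.fract (y k) ≤ 1 / 2) : ¬ UnifDistMod1 y := by
  intro hy
  have hlim := hy 0 (1 / 2) le_rfl (by norm_num) (by norm_num)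
  obtain ⟨M, hM⟩ :=
    eventually_atTop.1 (hlim.eventually_lt_const (by norm_num : (1 / 2 - 0 : ℝ) < 3 / 4))
  obtain ⟨N, hN, hblock⟩ := frequently_atTop.1 h (M + 1)
  have hcount : 3 * N ≤ #{k ∈ range (4 * N) | Int.fract (y k) ∈ Set.Icc 0 (1 / 2)} :=
    calc 3 * N = #(Ico N (4 * N)) := by simp only [Nat.card_Ico]; omega
      _ ≤ _ := card_le_card fun k hk ↦
        mem_filter.2 ⟨mem_range.2 (mem_Ico.1 hk).2, Int.fract_nonneg _, hblock k hk⟩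
  have hlt := hM (4 * N) (by omega)
  rw [div_lt_iff₀ (by exact_mod_cast (show 0 < 4 * N by omega))] at hlt
  have hcount' := (Nat.cast_le (α := ℝ)).2 hcount
  push_cast at hlt hcount'
  linarith

theorem limit_computable_basic_sequence_defeating_computable_reals :
    ∃ Q : ℕ → ℕ,
      (∀ n, 2 ≤ Q n) ∧
      (∀ n, ∃ k : ℕ, Q n = 2 ^ k) ∧
      (∃ g : ℕ → ℕ → ℕ, Computable₂ g ∧
        ∀ n, ∃ N, ∀ s, N ≤ s → g s n = Q n) ∧
      (∀ x : ℝ, x ∈ Set.Icc (0 : ℝ) 1 → ComputableReal x → ¬ QDistNormal Q x) := by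
  refine ⟨diagSeq, two_le_diagSeq, fun n ↦ ⟨_, rfl⟩,
    ⟨diagSeqAt, computable₂_diagSeqAt, fun n ↦ eventually_atTop.1 (eventually_diagSeqAt_eq n)⟩, ?_⟩
  rintro x - ⟨α, hα, rfl⟩
  obtain ⟨c, hc⟩ := exists_code_zero_mem_eval_iff hα
  refine not_unifDistMod1_of_frequently_fract_le_half (frequently_atTop.2 fun M ↦ ?_)
  set t := Nat.pair (encode c) M
  refine ⟨4 ^ t, (Nat.right_le_pair _ _).trans (Nat.lt_pow_self (by norm_num)).le, fun k hk ↦ ?_⟩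
  obtain ⟨n, rfl⟩ : ∃ n, k = n + 1 :=
    Nat.exists_eq_add_one.2 ((by positivity : 0 < 4 ^ t).trans_le (mem_Ico.1 hk).1)
  rw [← pow_succ'] at hk
  exact fract_prod_diagSeq_mul_binVal_le_half hc (requirement_eq_of_mem_Ico hk)
end

section
/- Let f : ℕ → ℕ be strictly increasing with f(0) = 0, let α : ℕ → Bool not end in an infinite string of 1's, and set q_n = 2^{f(n+1) − f(n)} for each n and Q = (q_n)_{n∈ℕ}. Suppose there are infinitely many n ∈ ℕ such that |{p < n : α(f(p)) = false}| ≥ (2/3)·n or |{p < n : α(f(p)) = true}| ≥ (2/3)·n. Then the real x_α = Σ_{n∈ℕ} α(n)·2^{−(n+1)} is not Q-distribution-normal. -/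
open scoped Classical

/-!
Since `∏_{i<k} q_i = 2^{f(k)}`, the `k`-th term of the sequence is `2^{f(k)} x_α`, whose
fractional part is `x_α` shifted by `f(k)` binary digits (this uses that `α` does not end in
`1`s). Its first digit `α(f(k))` decides whether it lies in `[0, 1/2]` or `[1/2, 1]`. A bias of
`2/3` along `f` therefore puts at least `2n/3` of the first `n` terms, infinitely often, into an
interval of length `1/2`, which uniform distribution forbids.
-/

open Filter Finset

lemma hasSum_one_div_two_pow_succ : HasSum (fun n : ℕ => (1 : ℝ) / 2 ^ (n + 1)) 1 := by
  convert hasSum_geometric_two' 1 using 2 with n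
  rw [pow_succ']
  ring

namespace binVal

variable (α : ℕ → Bool)

lemma term_nonneg (n : ℕ) : 0 ≤ (if α n then (1 : ℝ) else 0) / 2 ^ (n + 1) := by
  positivity

lemma term_le (n : ℕ) : (if α n then (1 : ℝ) else 0) / 2 ^ (n + 1) ≤ 1 / 2 ^ (n + 1) := by
  gcongr
  split <;> norm_num

lemma summable : Summable fun n => (if α n then (1 : ℝ) else 0) / 2 ^ (n + 1) :=
  .of_nonneg_of_le (term_nonneg α) (term_le α) hasSum_one_div_two_pow_succ.summable

end binVal

lemma binVal_nonneg (α : ℕ → Bool) : 0 ≤ binVal α :=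
  tsum_nonneg (binVal.term_nonneg α)

lemma binVal_le_one (α : ℕ → Bool) : binVal α ≤ 1 :=
  hasSum_le (binVal.term_le α) (binVal.summable α).hasSum hasSum_one_div_two_pow_succ

lemma binVal_lt_one {α : ℕ → Bool} {k : ℕ} (hk : α k = false) : binVal α < 1 :=
  hasSum_lt (i := k) (binVal.term_le α) (by simp [hk]) (binVal.summable α).hasSum
    hasSum_one_div_two_pow_succ

lemma two_mul_binVal (α : ℕ → Bool) :
    2 * binVal α = (if α 0 then 1 else 0) + binVal (fun n => α (n + 1)) := by
  rw [binVal, (binVal.summable α).tsum_eq_zero_add, binVal, mul_add, ← tsum_mul_left]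
  congr 1
  · ring
  · congr 1 with n
    rw [pow_succ]
    ring

lemma binVal_le_half {α : ℕ → Bool} (h : α 0 = false) : binVal α ≤ 1 / 2 := by
  have hdouble := two_mul_binVal α
  simp only [h, Bool.false_eq_true, ↓reduceIte, zero_add] at hdouble
  linarith [binVal_le_one (fun n => α (n + 1))]

lemma half_le_binVal {α : ℕ → Bool} (h : α 0 = true) : 1 / 2 ≤ binVal α := by
  have hdouble := two_mul_binVal α
  simp only [h, ↓reduceIte] at hdouble
  linarith [binVal_nonneg (fun n => α (n + 1))]

lemma exists_int_two_pow_mul_binVal (α : ℕ → Bool) (m : ℕ) :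
    ∃ z : ℤ, 2 ^ m * binVal α = z + binVal (fun n => α (n + m)) := by
  induction m with
  | zero => exact ⟨0, by simp⟩
  | succ m ih =>
    obtain ⟨z, hz⟩ := ih
    refine ⟨2 * z + if α m then 1 else 0, ?_⟩
    have hstep := two_mul_binVal (fun n => α (n + m))
    have hshift : (fun n => α (n + 1 + m)) = fun n => α (n + (m + 1)) := by
      ext n
      rw [add_right_comm, add_assoc]
    simp only [zero_add, hshift] at hstep
    rw [pow_succ', mul_assoc, hz, mul_add, hstep]
    push_cast
    ring

lemma fract_two_pow_mul_binVal {α : ℕ → Bool} (hα : ∀ m, ∃ k, m ≤ k ∧ α k = false) (m : ℕ) :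
    Int.fract (2 ^ m * binVal α) = binVal (fun n => α (n + m)) := by
  obtain ⟨z, hz⟩ := exists_int_two_pow_mul_binVal α m
  obtain ⟨k, hmk, hk⟩ := hα m
  rw [hz, Int.fract_intCast_add, Int.fract_eq_self]
  exact ⟨binVal_nonneg _, binVal_lt_one (k := k - m) (by rwa [Nat.sub_add_cancel hmk])⟩

lemma prod_pow_sub_of_monotone {M : Type*} [CommMonoid M] (x : M) {f : ℕ → ℕ} (hf : Monotone f)
    (k : ℕ) : ∏ i ∈ range k, x ^ (f (i + 1) - f i) = x ^ (f k - f 0) := by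
  rw [prod_pow_eq_pow_sum, sum_range_tsub hf]

lemma UnifDistMod1.not_frequently_le_card {y : ℕ → ℝ} (hy : UnifDistMod1 y) {a b c : ℝ}
    (ha : 0 ≤ a) (hab : a ≤ b) (hb : b ≤ 1) (hc : b - a < c) {P : ℕ → Prop} [DecidablePred P]
    (hP : ∀ k, P k → Int.fract (y k) ∈ Set.Icc a b) :
    ¬ ∃ᶠ n in atTop, c * n ≤ ((range n).filter P).card := by
  rw [not_frequently]
  filter_upwards [(hy a b ha hab hb).eventually_lt_const hc, eventually_gt_atTop 0] with n hn hn0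
  rw [div_lt_iff₀ (by exact_mod_cast hn0)] at hn
  have hsub : ((range n).filter P).card ≤
      ((range n).filter fun k => Int.fract (y k) ∈ Set.Icc a b).card :=
    card_le_card (monotone_filter_right _ fun k _ => hP k)
  exact not_le.mpr ((Nat.cast_le.mpr hsub).trans_lt hn)

theorem biased_along_f_not_normal
    (f : ℕ → ℕ) (hmono : StrictMono f) (h0 : f 0 = 0)
    (α : ℕ → Bool) (hα : ∀ m, ∃ k, m ≤ k ∧ α k = false)
    (Q : ℕ → ℕ) (hQ : ∀ n, Q n = 2 ^ (f (n + 1) - f n))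
    (hbias : ∃ᶠ n in Filter.atTop,
      (2 / 3 : ℝ) * n ≤ (((Finset.range n).filter (fun p => α (f p) = false)).card : ℝ) ∨
      (2 / 3 : ℝ) * n ≤ (((Finset.range n).filter (fun p => α (f p) = true)).card : ℝ)) :
    ¬ QDistNormal Q (binVal α) := by
  intro hnormal
  have hfract : ∀ k, Int.fract ((∏ i ∈ range k, (Q i : ℝ)) * binVal α) =
      binVal (fun n => α (n + f k)) := by
    intro k
    simp only [hQ, Nat.cast_pow, Nat.cast_ofNat]
    rw [prod_pow_sub_of_monotone _ hmono.monotone, h0, Nat.sub_zero, fract_two_pow_mul_binVal hα]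
  rcases frequently_or_distrib.mp hbias with hfalse | htrue
  · refine UnifDistMod1.not_frequently_le_card (b := 1 / 2) hnormal le_rfl (by norm_num)
      (by norm_num) (by norm_num) (fun k hk => ?_) hfalse
    rw [hfract]
    exact ⟨binVal_nonneg _, binVal_le_half (by simpa using hk)⟩
  · refine UnifDistMod1.not_frequently_le_card (a := 1 / 2) hnormal (by norm_num) (by norm_num)
      le_rfl (by norm_num) (fun k hk => ?_) htrue
    rw [hfract]
    exact ⟨half_le_binVal (by simpa using hk), binVal_le_one _⟩
end

section
/- There exists a strictly increasing function f : ℕ → ℕ with f(0) = 0 which is limit computable (i.e., there is a computable g : ℕ × ℕ → ℕ with f(p) = lim_{s→∞} g(s,p) for all p), satisfies f(3^{t+1} − 1) ≤ 2·(3^{t+1} − 1) for all t, and has the property that for every total computable function α : ℕ → Bool there exist infinitely many n ∈ ℕ such that |{p < n : α(f(p)) = false}| ≥ (2/3)·n or |{p < n : α(f(p)) = true}| ≥ (2/3)·n. -/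
/-!
The indices `3 ^ t ≤ p < 3 ^ (t + 1)` form block `t`. Its `2 * 3 ^ t` positions are chosen among
the `4 * 3 ^ t` numbers of the window `[2 * 3 ^ t - 1, 2 * 3 ^ (t + 1) - 2]`. The windows are
disjoint and increasing, so `f` is strictly increasing and `f (3 ^ (t + 1) - 1)` is at most the
right end of window `t`. Block `t` reads the `t`-th program as a bit sequence on its window and
takes the first `2 * 3 ^ t` positions carrying the majority bit. Running the programs for `s` steps
gives computable approximations, which settle because each block depends on finitely many
computations. If the `t`-th program computes `α`, then `α` is constant on block `t`, which gives
`2 * 3 ^ t = (2 / 3) * 3 ^ (t + 1)` equal values of `α ∘ f` below `3 ^ (t + 1)`; every program is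
the `t`-th one for infinitely many `t`.
-/

open scoped Classical

open Filter Nat.Partrec Code Encodable

namespace CoreConstruction

def window (t : ℕ) : List ℕ := List.range' (2 * 3 ^ t - 1) (4 * 3 ^ t)

theorem mem_window {t x : ℕ} :
    x ∈ window t ↔ 2 * 3 ^ t ≤ x + 1 ∧ x + 2 ≤ 2 * 3 ^ (t + 1) := by
  have := Nat.one_le_pow t 3 (by norm_num)
  rw [window, List.mem_range'_1, pow_succ]
  omega

@[simp] theorem length_window (t : ℕ) : (window t).length = 4 * 3 ^ t := List.length_range'

def majorityBit (β : ℕ → Bool) (t : ℕ) : Bool :=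
  decide (2 * 3 ^ t ≤ ((window t).filter β).length)

def majorityBlock (β : ℕ → Bool) (t : ℕ) : List ℕ :=
  ((window t).filter fun x => β x = majorityBit β t).take (2 * 3 ^ t)

section MajorityBlock

variable {β β' : ℕ → Bool} {t : ℕ}

theorem le_length_filter_majorityBit :
    2 * 3 ^ t ≤ ((window t).filter fun x => β x = majorityBit β t).length := by
  have hsplit := (window t).length_eq_length_filter_add β
  rw [length_window] at hsplit
  unfold majorityBit
  by_cases h : 2 * 3 ^ t ≤ ((window t).filter β).length
  · simp [h]
  · simp only [h, decide_false, Bool.decide_eq_false]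
    omega

theorem length_majorityBlock : (majorityBlock β t).length = 2 * 3 ^ t := by
  rw [majorityBlock, List.length_take, min_eq_left le_length_filter_majorityBit]

theorem majorityBlock_sublist : (majorityBlock β t).Sublist (window t) :=
  (List.take_sublist _ _).trans List.filter_sublist

theorem pairwise_lt_majorityBlock : (majorityBlock β t).Pairwise (· < ·) :=
  (List.pairwise_lt_range' ..).sublist majorityBlock_sublist

theorem eq_majorityBit_of_mem {x : ℕ} (hx : x ∈ majorityBlock β t) :
    β x = majorityBit β t := by
  simpa using List.of_mem_filter (List.mem_of_mem_take hx)

theorem majorityBlock_congr (h : ∀ x ∈ window t, β x = β' x) :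
    majorityBlock β t = majorityBlock β' t := by
  have hbit : majorityBit β t = majorityBit β' t := by
    rw [majorityBit, majorityBit, List.filter_congr h]
  rw [majorityBlock, majorityBlock, hbit, List.filter_congr fun x hx => by rw [h x hx]]

end MajorityBlock

/-- Index `0` is treated separately since `Nat.log 3 0 = 0` would place it in block `0`. -/
def positions (B : ℕ → ℕ → Bool) (p : ℕ) : ℕ :=
  if p = 0 then 0
  else (majorityBlock (B (Nat.log 3 p)) (Nat.log 3 p)).getD (p - 3 ^ Nat.log 3 p) 0

section Positions

variable (B : ℕ → ℕ → Bool) {p t : ℕ}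

theorem positions_zero : positions B 0 = 0 := rfl

theorem positions_eq_getElem (h₁ : 3 ^ t ≤ p) (h₂ : p < 3 ^ (t + 1)) :
    positions B p = (majorityBlock (B t) t)[p - 3 ^ t]'(by
      rw [length_majorityBlock, pow_succ] at *; omega) := by
  have hp : p ≠ 0 := (Nat.pow_pos (by norm_num)).trans_le h₁ |>.ne'
  rw [positions, if_neg hp, Nat.log_eq_of_pow_le_of_lt_pow h₁ h₂, List.getD_eq_getElem]

theorem apply_positions_eq_majorityBit (h₁ : 3 ^ t ≤ p) (h₂ : p < 3 ^ (t + 1)) :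
    B t (positions B p) = majorityBit (B t) t := by
  rw [positions_eq_getElem B h₁ h₂]
  exact eq_majorityBit_of_mem (List.getElem_mem _)

theorem positions_mem_window (h₁ : 3 ^ t ≤ p) (h₂ : p < 3 ^ (t + 1)) :
    positions B p ∈ window t := by
  rw [positions_eq_getElem B h₁ h₂]
  exact majorityBlock_sublist.subset (List.getElem_mem _)

theorem positions_mem_window_log (hp : p ≠ 0) : positions B p ∈ window (Nat.log 3 p) :=
  positions_mem_window B (Nat.pow_log_le_self 3 hp) (Nat.lt_pow_succ_log_self (by norm_num) p)

theorem positions_add_two_le (hp : p < 3 ^ (t + 1)) : positions B p + 2 ≤ 2 * 3 ^ (t + 1) := by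
  rcases eq_or_ne p 0 with rfl | hp₀
  · have := Nat.one_le_pow (t + 1) 3 (by norm_num)
    rw [positions_zero]
    omega
  · have hlog : Nat.log 3 p + 1 ≤ t + 1 := Nat.log_lt_of_lt_pow hp₀ hp
    have := Nat.pow_le_pow_right (by norm_num : 0 < 3) hlog
    have := (mem_window.1 (positions_mem_window_log B hp₀)).2
    omega

theorem strictMono_positions : StrictMono (positions B) := by
  intro p q hpq
  have hq_mem := mem_window.1 (positions_mem_window_log B (by omega : q ≠ 0))
  rcases eq_or_ne p 0 with rfl | hp
  · have := Nat.one_le_pow (Nat.log 3 q) 3 (by norm_num)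
    rw [positions_zero]
    omega
  rcases (Nat.log_mono_right (b := 3) hpq.le).lt_or_eq with hlt | heq
  · have := positions_add_two_le B (Nat.lt_pow_succ_log_self (by norm_num) p)
    have := Nat.pow_le_pow_right (by norm_num : 0 < 3) hlt
    omega
  · have hp₁ := Nat.pow_log_le_self 3 hp
    have hp₂ := Nat.lt_pow_succ_log_self (by norm_num : 1 < 3) p
    have hq₂ := Nat.lt_pow_succ_log_self (by norm_num : 1 < 3) q
    rw [← heq] at hq₂
    rw [positions_eq_getElem B hp₁ hp₂, positions_eq_getElem B (hp₁.trans hpq.le) hq₂]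
    exact List.pairwise_iff_getElem.1 pairwise_lt_majorityBlock _ _ _ _ (by omega)

theorem positions_congr {B' : ℕ → ℕ → Bool}
    (h : ∀ x ∈ window (Nat.log 3 p), B (Nat.log 3 p) x = B' (Nat.log 3 p) x) :
    positions B p = positions B' p := by
  rw [positions, positions, majorityBlock_congr h]

end Positions

theorem two_thirds_le_card_filter {φ : ℕ → Bool} {b : Bool} {t : ℕ}
    (h : ∀ p, 3 ^ t ≤ p → p < 3 ^ (t + 1) → φ p = b) :
    (2 / 3 : ℝ) * (3 ^ (t + 1) : ℕ) ≤
      ((Finset.range (3 ^ (t + 1))).filter fun p => φ p = b).card := by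
  have hsub : Finset.Ico (3 ^ t) (3 ^ (t + 1)) ⊆
      (Finset.range (3 ^ (t + 1))).filter fun p => φ p = b := fun p hp => by
    rw [Finset.mem_Ico] at hp
    exact Finset.mem_filter.2 ⟨Finset.mem_range.2 hp.2, h p hp.1 hp.2⟩
  have hcard := Finset.card_le_card hsub
  rw [Nat.card_Ico] at hcard
  have h3 : 3 ^ (t + 1) = 3 ^ t * 3 := pow_succ 3 t
  calc (2 / 3 : ℝ) * (3 ^ (t + 1) : ℕ) = (2 * 3 ^ t : ℕ) := by push_cast; ring
    _ ≤ _ := by exact_mod_cast (by omega : 2 * 3 ^ t ≤ _)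

section Primrec

open Primrec

theorem primrec_const_pow (b : ℕ) : Primrec (b ^ · : ℕ → ℕ) :=
  (Primrec₂.unpaired'.1 Nat.Primrec.pow).comp (const b) .id

theorem log_eq_findGreatest {b : ℕ} (hb : 1 < b) (n : ℕ) :
    Nat.log b n = Nat.findGreatest (fun k => b ^ k ≤ n) n := by
  refine ((Nat.findGreatest_eq_iff (P := fun k => b ^ k ≤ n)).2
    ⟨Nat.log_le_self b n, fun h => Nat.pow_log_le_self b ?_, fun k hk _ => ?_⟩).symm
  · rintro rfl
    simp at h
  · exact not_le.2 (Nat.lt_pow_of_log_lt hb hk)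

theorem primrec_log {b : ℕ} (hb : 1 < b) : Primrec (Nat.log b) := by
  have : PrimrecRel fun n k : ℕ => b ^ k ≤ n := nat_le.comp ((primrec_const_pow b).comp snd) fst
  exact (nat_findGreatest .id this).of_eq fun n => (log_eq_findGreatest hb n).symm

theorem primrec_window : Primrec window := by
  have hpow := primrec_const_pow 3
  refine (list_map (list_range.comp (nat_mul.comp (const 4) hpow))
    (nat_add.comp₂ ((nat_sub.comp (nat_mul.comp (const 2) hpow) (const 1)).comp₂
      Primrec₂.left) Primrec₂.right)).of_eq fun t => ?_
  rw [window, List.range'_eq_map_range]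

theorem primrec_filter {α β : Type*} [Primcodable α] [Primcodable β] {f : α → List β}
    {q : α → β → Bool} (hf : Primrec f) (hq : Primrec₂ q) :
    Primrec fun a => (f a).filter (q a) := by
  have : PrimrecRel fun b a => q a b = true :=
    primrecPred (hq.comp snd fst |>.of_eq fun _ => Bool.decide_eq_true.symm)
  exact (PrimrecRel.listFilter this).comp hf .id |>.of_eq fun a => by simp

variable {α : Type*} [Primcodable α] {B : α → ℕ → ℕ → Bool}

theorem primrec₂_majorityBlock (hB : Primrec fun q : α × ℕ × ℕ => B q.1 q.2.1 q.2.2) :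
    Primrec₂ fun a t => majorityBlock (B a t) t := by
  have hB₂ : Primrec₂ fun (q : α × ℕ) x => B q.1 q.2 x :=
    hB.comp (fst.comp fst |>.pair ((snd.comp fst).pair snd))
  have hpow := (primrec_const_pow 3).comp (snd : Primrec fun q : α × ℕ => q.2)
  have hwindow := primrec_window.comp (snd : Primrec fun q : α × ℕ => q.2)
  have hbit : Primrec fun q : α × ℕ => majorityBit (B q.1 q.2) q.2 :=
    (nat_le.comp (nat_mul.comp (const 2) hpow)
      (list_length.comp (primrec_filter hwindow hB₂))).decide
  have hagree : Primrec₂ fun (q : α × ℕ) x =>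
      decide (B q.1 q.2 x = majorityBit (B q.1 q.2) q.2) :=
    (Primrec.eq.comp hB₂ (hbit.comp fst)).decide
  exact list_take.comp (nat_mul.comp (const 2) hpow) (primrec_filter hwindow hagree)

theorem primrec₂_positions (hB : Primrec fun q : α × ℕ × ℕ => B q.1 q.2.1 q.2.2) :
    Primrec₂ fun a p => positions (B a) p := by
  have hlog := (primrec_log (by norm_num : 1 < 3)).comp (snd : Primrec fun q : α × ℕ => q.2)
  exact ite (Primrec.eq.comp snd (const 0)) (const 0)
    ((list_getD 0).comp ((primrec₂_majorityBlock hB).comp fst hlog)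
      (nat_sub.comp snd ((primrec_const_pow 3).comp hlog)))

end Primrec

def code (t : ℕ) : Code := Denumerable.ofNat Code t.unpair.1

/-- A program computing `α : ℕ → Bool` outputs `encode (α x)`, which is `0` iff `α x = false`.
-/
def stageBit (s t x : ℕ) : Bool := decide (evaln s (code t) x ≠ some 0)

noncomputable def limitBit (t x : ℕ) : Bool := decide (0 ∉ eval (code t) x)

theorem primrec_stageBit : Primrec fun q : ℕ × ℕ × ℕ => stageBit q.1 q.2.1 q.2.2 := by
  have hcode : Primrec code := (Primrec.ofNat Code).comp (Primrec.fst.comp Primrec.unpair)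
  have hevaln : Primrec fun q : ℕ × ℕ × ℕ => evaln q.1 (code q.2.1) q.2.2 :=
    primrec_evaln.comp ((Primrec.fst.pair (hcode.comp (Primrec.fst.comp Primrec.snd))).pair
      (Primrec.snd.comp Primrec.snd))
  exact (Primrec.eq.comp hevaln (Primrec.const (some 0))).not.decide

theorem eventually_mem_evaln_iff (c : Code) (x v : ℕ) :
    ∀ᶠ s in atTop, v ∈ evaln s c x ↔ v ∈ eval c x := by
  by_cases h : v ∈ eval c x
  · obtain ⟨k, hk⟩ := evaln_complete.1 h
    filter_upwards [eventually_ge_atTop k] with s hs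
    exact iff_of_true (evaln_mono hs hk) h
  · exact Eventually.of_forall fun s => iff_of_false (fun hs => h (evaln_sound hs)) h

theorem eventually_stageBit_eq (t x : ℕ) : ∀ᶠ s in atTop, stageBit s t x = limitBit t x := by
  filter_upwards [eventually_mem_evaln_iff (code t) x 0] with s hs
  simp only [stageBit, limitBit, ← hs, Option.mem_def]

theorem eventually_positions_stageBit_eq (p : ℕ) :
    ∀ᶠ s in atTop, positions (stageBit s) p = positions limitBit p := by
  have : ∀ᶠ s in atTop, ∀ x ∈ (window (Nat.log 3 p)).toFinset,
      stageBit s (Nat.log 3 p) x = limitBit (Nat.log 3 p) x :=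
    (eventually_all_finset _).2 fun x _ => eventually_stageBit_eq _ x
  filter_upwards [this] with s hs
  exact positions_congr _ fun x hx => hs x (List.mem_toFinset.2 hx)

theorem exists_code_of_computable {α : ℕ → Bool} (hα : Computable α) :
    ∃ c : Code, ∀ x, eval c x = Part.some (encode (α x)) := by
  obtain ⟨c, hc⟩ := exists_code.1 hα
  exact ⟨c, fun x => by simp [hc]⟩

theorem frequently_code_eq (c : Code) : ∃ᶠ t in atTop, code t = c := by
  refine frequently_atTop.2 fun n => ⟨Nat.pair (encode c) n, Nat.right_le_pair _ _, ?_⟩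
  simp [code]

theorem limitBit_eq {α : ℕ → Bool} {c : Code}
    (hc : ∀ x, eval c x = Part.some (encode (α x))) {t : ℕ} (ht : code t = c) (x : ℕ) : limitBit t x = α x := by
  cases h : α x <;> simp [limitBit, ht, hc, h]

end CoreConstruction

open CoreConstruction

theorem core_construction :
    ∃ f : ℕ → ℕ,
      StrictMono f ∧ f 0 = 0 ∧
      (∃ g : ℕ → ℕ → ℕ, Computable₂ g ∧ ∀ p, ∃ N, ∀ s, N ≤ s → g s p = f p) ∧
      (∀ t : ℕ, f (3 ^ (t + 1) - 1) ≤ 2 * (3 ^ (t + 1) - 1)) ∧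
      (∀ α : ℕ → Bool, Computable α →
        ∃ᶠ n in Filter.atTop,
          (2 / 3 : ℝ) * n ≤
            (((Finset.range n).filter (fun p => α (f p) = false)).card : ℝ) ∨
          (2 / 3 : ℝ) * n ≤
            (((Finset.range n).filter (fun p => α (f p) = true)).card : ℝ)) := by
  refine ⟨positions limitBit, strictMono_positions _, positions_zero _,
    ⟨fun s p => positions (stageBit s) p, (primrec₂_positions primrec_stageBit).to_comp,
      fun p => eventually_atTop.1 (eventually_positions_stageBit_eq p)⟩,
    fun t => ?_, fun α hα => ?_⟩
  · have := positions_add_two_le limitBit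
      (Nat.sub_lt (Nat.pow_pos (by norm_num)) one_pos : 3 ^ (t + 1) - 1 < 3 ^ (t + 1))
    omega
  obtain ⟨c, hc⟩ := exists_code_of_computable hα
  have hpow : Tendsto (fun t => 3 ^ (t + 1)) atTop atTop :=
    StrictMono.tendsto_atTop fun a b hab => Nat.pow_lt_pow_right (by norm_num) (by omega)
  refine hpow.frequently_map _ (fun t ht => ?_) (frequently_code_eq c)
  have hblock : ∀ p, 3 ^ t ≤ p → p < 3 ^ (t + 1) →
      α (positions limitBit p) = majorityBit (limitBit t) t := fun p h₁ h₂ => by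
    rw [← limitBit_eq hc ht, apply_positions_eq_majorityBit limitBit h₁ h₂]
  cases hb : majorityBit (limitBit t) t
  · exact Or.inl (two_thirds_le_card_filter (hb ▸ hblock))
  · exact Or.inr (two_thirds_le_card_filter (hb ▸ hblock))
end
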